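/- arXiv:2301.09848 — 2 statements merged into one kernel-verified Lean document; each statement's English description precedes it below -/
import Mathlib

section
/- (Single-step descent bound) Let L : ℝ^n → ℝ be convex with ‖∇L(θ)‖ ≤ L₀ for all θ. Let θ^1,…,θ^J ∈ ℝ^n with average θ̄ = (1/J)∑_j θ^j, let ḡ = (1/J)∑_j ∇L(θ^j), and define θ̄' = θ̄ - η ḡ. Then for any θ ∈ ℝ^n: ∑_{j=1}^J (L(θ^j) - L(θ)) ≤ (η/2) J L₀² + J (‖θ̄ - θ‖² - ‖θ̄' - θ‖²)/(2η) + L₀ ∑_{j=1}^J ‖θ^j - θ̄‖. -/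
open Finset

open scoped RealInnerProductSpace

/-!
Convexity bounds `L θʲ - L θ` by `⟪∇L θʲ, θʲ - θ⟫`. Splitting `θʲ - θ` through `θ̄` and applying
Cauchy–Schwarz leaves `L₀ ‖θʲ - θ̄‖` plus `⟪∇L θʲ, θ̄ - θ⟫`; the latter terms sum to
`J ⟪ḡ, θ̄ - θ⟫`, controlled by expanding `‖θ̄ - η ḡ - θ‖²` and using `‖ḡ‖ ≤ L₀`.
-/

/-- On the line through `y` and `x` this is the bound of a secant slope by the derivative at its
right endpoint. -/
theorem ConvexOn.sub_le_of_hasFDerivAt {E : Type*} [NormedAddCommGroup E] [NormedSpace ℝ E]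
    {s : Set E} {f : E → ℝ} {f' : E →L[ℝ] ℝ} {x y : E}
    (hf : ConvexOn ℝ s f) (hx : x ∈ s) (hy : y ∈ s) (hf' : HasFDerivAt f f' x) :
    f x - f y ≤ f' (x - y) := by
  set γ : ℝ →ᵃ[ℝ] E := AffineMap.lineMap y x
  have hγ0 : γ 0 = y := AffineMap.lineMap_apply_zero y x
  have hγ1 : γ 1 = x := AffineMap.lineMap_apply_one y x
  have hγ : HasDerivAt γ (x - y) 1 := AffineMap.hasDerivAt_lineMap
  have hφ : HasDerivAt (f ∘ γ) (f' (x - y)) 1 := (hγ1 ▸ hf').comp_hasDerivAt 1 hγ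
  have hslope := (hf.comp_affineMap γ).slope_le_of_hasDerivAt
    (by simpa [hγ0] using hy) (by simpa [hγ1] using hx) one_pos hφ
  simpa [slope, hγ0, hγ1] using hslope

theorem ConvexOn.sub_le_inner_gradient {E : Type*} [NormedAddCommGroup E]
    [InnerProductSpace ℝ E] [CompleteSpace E] {s : Set E} {f : E → ℝ} {x y : E}
    (hf : ConvexOn ℝ s f) (hx : x ∈ s) (hy : y ∈ s) (hfx : DifferentiableAt ℝ f x) :
    f x - f y ≤ ⟪gradient f x, x - y⟫ := by
  simpa using hf.sub_le_of_hasFDerivAt hx hy (hasGradientAt_iff_hasFDerivAt.mp hfx.hasGradientAt)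

theorem ConvexOn.sum_sub_le_inner_sum_gradient {E ι : Type*} [NormedAddCommGroup E]
    [InnerProductSpace ℝ E] [CompleteSpace E] {s : Set E} {f : E → ℝ} {t : Finset ι}
    {x : ι → E} {y : E} {C : ℝ} (hf : ConvexOn ℝ s f) (hx : ∀ i ∈ t, x i ∈ s) (hy : y ∈ s)
    (hfx : ∀ i ∈ t, DifferentiableAt ℝ f (x i)) (hC : ∀ i ∈ t, ‖gradient f (x i)‖ ≤ C) (z : E) :
    ∑ i ∈ t, (f (x i) - f y) ≤
      C * ∑ i ∈ t, ‖x i - z‖ + ⟪∑ i ∈ t, gradient f (x i), z - y⟫ := by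
  rw [mul_sum, sum_inner, ← sum_add_distrib]
  refine sum_le_sum fun i hi => ?_
  have hsplit : ⟪gradient f (x i), x i - y⟫ =
      ⟪gradient f (x i), x i - z⟫ + ⟪gradient f (x i), z - y⟫ := by
    rw [← inner_add_right, sub_add_sub_cancel]
  have hcs : ⟪gradient f (x i), x i - z⟫ ≤ C * ‖x i - z‖ :=
    (real_inner_le_norm _ _).trans (by gcongr; exact hC i hi)
  linarith [hf.sub_le_inner_gradient (hx i hi) hy (hfx i hi)]

theorem natCast_card_smul_inv_smul_sum {E ι : Type*} [AddCommGroup E] [Module ℝ E]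
    (t : Finset ι) (v : ι → E) :
    (#t : ℝ) • ((#t : ℝ)⁻¹ • ∑ i ∈ t, v i) = ∑ i ∈ t, v i := by
  rcases t.eq_empty_or_nonempty with rfl | ht
  · simp
  · exact smul_inv_smul₀ (by exact_mod_cast ht.card_pos.ne') _

theorem norm_inv_card_smul_sum_le {E ι : Type*} [SeminormedAddCommGroup E] [NormedSpace ℝ E]
    {t : Finset ι} {v : ι → E} {C : ℝ} (hC₀ : 0 ≤ C) (hC : ∀ i ∈ t, ‖v i‖ ≤ C) :
    ‖(#t : ℝ)⁻¹ • ∑ i ∈ t, v i‖ ≤ C := by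
  rcases t.eq_empty_or_nonempty with rfl | ht
  · simpa using hC₀
  have hcard : (0 : ℝ) < #t := by exact_mod_cast ht.card_pos
  calc ‖(#t : ℝ)⁻¹ • ∑ i ∈ t, v i‖ ≤ (#t : ℝ)⁻¹ * ∑ i ∈ t, ‖v i‖ := by
        rw [norm_smul, norm_inv, Real.norm_natCast]
        gcongr
        exact norm_sum_le _ _
    _ ≤ (#t : ℝ)⁻¹ * (#t * C) := by
        gcongr
        simpa using sum_le_sum hC
    _ = C := by field_simp

theorem real_inner_le_of_gradient_step {E : Type*} [NormedAddCommGroup E] [InnerProductSpace ℝ E]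
    {g : E} {η C : ℝ} (hη : 0 < η) (hg : ‖g‖ ≤ C) (x θ : E) :
    ⟪g, x - θ⟫ ≤ (‖x - θ‖ ^ 2 - ‖x - η • g - θ‖ ^ 2) / (2 * η) + η / 2 * C ^ 2 := by
  have hexpand : ‖x - η • g - θ‖ ^ 2 = ‖x - θ‖ ^ 2 - 2 * η * ⟪g, x - θ⟫ + η ^ 2 * ‖g‖ ^ 2 := by
    rw [sub_right_comm, norm_sub_sq_real, real_inner_smul_right, real_inner_comm, norm_smul,
      Real.norm_of_nonneg hη.le]
    ring
  have hgap : (‖x - θ‖ ^ 2 - ‖x - η • g - θ‖ ^ 2) / (2 * η) = ⟪g, x - θ⟫ - η / 2 * ‖g‖ ^ 2 := by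
    rw [hexpand]
    field_simp
    ring
  have hg2 : ‖g‖ ^ 2 ≤ C ^ 2 := pow_le_pow_left₀ (norm_nonneg g) hg 2
  rw [hgap]
  nlinarith

theorem stmt_6_general (n J : ℕ)
    (L : EuclideanSpace ℝ (Fin n) → ℝ)
    (hconv : ConvexOn ℝ Set.univ L) (hdiff : Differentiable ℝ L)
    (L₀ : ℝ) (hgrad : ∀ θ, ‖gradient L θ‖ ≤ L₀)
    (η : ℝ) (hη : 0 < η)
    (θv : Fin J → EuclideanSpace ℝ (Fin n))
    (θbar gbar θbar' : EuclideanSpace ℝ (Fin n))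
    (hgbar : gbar = (J : ℝ)⁻¹ • ∑ j, gradient L (θv j))
    (hθbar' : θbar' = θbar - η • gbar)
    (θ : EuclideanSpace ℝ (Fin n)) :
    ∑ j, (L (θv j) - L θ) ≤
      (η / 2) * J * L₀ ^ 2 + J * ((‖θbar - θ‖ ^ 2 - ‖θbar' - θ‖ ^ 2) / (2 * η))
        + L₀ * ∑ j, ‖θv j - θbar‖ := by
  have hL₀ : 0 ≤ L₀ := (norm_nonneg _).trans (hgrad 0)
  have hsum : ∑ j, gradient L (θv j) = (J : ℝ) • gbar := by
    simpa [hgbar] using (natCast_card_smul_inv_smul_sum univ fun j => gradient L (θv j)).symm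
  have hgbar_le : ‖gbar‖ ≤ L₀ := by
    simpa [hgbar] using norm_inv_card_smul_sum_le (t := univ) hL₀ fun j _ => hgrad (θv j)
  subst hθbar'
  calc ∑ j, (L (θv j) - L θ)
      ≤ L₀ * ∑ j, ‖θv j - θbar‖ + ⟪∑ j, gradient L (θv j), θbar - θ⟫ :=
        hconv.sum_sub_le_inner_sum_gradient (fun _ _ => trivial) trivial
          (fun j _ => hdiff (θv j)) (fun j _ => hgrad (θv j)) θbar
    _ = L₀ * ∑ j, ‖θv j - θbar‖ + J * ⟪gbar, θbar - θ⟫ := by rw [hsum, real_inner_smul_left]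
    _ ≤ L₀ * ∑ j, ‖θv j - θbar‖ + J * ((‖θbar - θ‖ ^ 2 - ‖θbar - η • gbar - θ‖ ^ 2) / (2 * η)
        + η / 2 * L₀ ^ 2) := by gcongr; exact real_inner_le_of_gradient_step hη hgbar_le θbar θ
    _ = _ := by ring

/-- Single-step descent bound, equation (24) of the paper. -/
theorem stmt_6 (n J : ℕ) (hJ : 0 < J)
    (L : EuclideanSpace ℝ (Fin n) → ℝ)
    (hconv : ConvexOn ℝ Set.univ L) (hdiff : Differentiable ℝ L)
    (L₀ : ℝ) (hgrad : ∀ θ, ‖gradient L θ‖ ≤ L₀)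
    (η : ℝ) (hη : 0 < η)
    (θv : Fin J → EuclideanSpace ℝ (Fin n))
    (θbar gbar θbar' : EuclideanSpace ℝ (Fin n))
    (hθbar : θbar = (J : ℝ)⁻¹ • ∑ j, θv j)
    (hgbar : gbar = (J : ℝ)⁻¹ • ∑ j, gradient L (θv j))
    (hθbar' : θbar' = θbar - η • gbar)
    (θ : EuclideanSpace ℝ (Fin n)) :
    ∑ j, (L (θv j) - L θ) ≤
      (η / 2) * J * L₀ ^ 2 + J * ((‖θbar - θ‖ ^ 2 - ‖θbar' - θ‖ ^ 2) / (2 * η))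
        + L₀ * ∑ j, ‖θv j - θbar‖ :=
  stmt_6_general n J L hconv hdiff L₀ hgrad η hη θv θbar gbar θbar' hgbar hθbar' θ
end

section
/- (QSGD quantizer variance bound, per coordinate construction) Let v ∈ ℝ^n be nonzero, M ≥ 1 an integer, and for each coordinate i define the random variable Q(v)_i = ‖v‖ · sign(v_i) · ξ_i where, with l = ⌊M|v_i|/‖v‖⌋, ξ_i equals l/M with probability 1 - (M|v_i|/‖v‖ - l) and (l+1)/M otherwise, independently across coordinates. Then E[Q(v)] = v and E‖Q(v) - v‖² ≤ min(n/M², √n/M) · ‖v‖². -/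
/-!
Each `ξ_i` is an unbiased stochastic rounding of `x_i = M|v_i|/‖v‖` to the grid `ℤ/M`, so
`Q(v)_i` has mean `v_i` and variance at most `‖v‖² p_i (1 - p_i) / M²`, where `p_i = fract x_i`.
It remains to bound `∑ p_i (1 - p_i)` twice: by `n`, since every term is at most `1`, and by
`∑ x_i = M ‖v‖₁ / ‖v‖ ≤ M √n`, since every term is at most `p_i ≤ x_i`.
-/

open MeasureTheory Finset

section TwoPoint

variable {Ω : Type*} [MeasurableSpace Ω] {μ : Measure Ω} [IsProbabilityMeasure μ]
  {ξ : Ω → ℝ} {a b p : ℝ}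

lemma ae_eq_or_eq_of_two_point (hξ : Measurable ξ) (hab : a ≠ b) (hp0 : 0 ≤ p) (hp1 : p ≤ 1)
    (ha : μ {ω | ξ ω = a} = ENNReal.ofReal (1 - p)) (hb : μ {ω | ξ ω = b} = ENNReal.ofReal p) :
    ∀ᵐ ω ∂μ, ξ ω = a ∨ ξ ω = b := by
  have hdisj : Disjoint {ω | ξ ω = a} {ω | ξ ω = b} :=
    Set.disjoint_left.2 fun _ ha hb => hab (ha.symm.trans hb)
  have hma : MeasurableSet {ω | ξ ω = a} := hξ (measurableSet_singleton a)
  have hmb : MeasurableSet {ω | ξ ω = b} := hξ (measurableSet_singleton b)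
  change {ω | ξ ω = a} ∪ {ω | ξ ω = b} ∈ ae μ
  rw [mem_ae_iff_prob_eq_one (hma.union hmb),
    measure_union hdisj hmb, ha, hb, ← ENNReal.ofReal_add (by linarith) hp0]
  simp

lemma comp_ae_eq_indicator_of_two_point (hξ : Measurable ξ) (hab : a ≠ b) (hp0 : 0 ≤ p)
    (hp1 : p ≤ 1)
    (ha : μ {ω | ξ ω = a} = ENNReal.ofReal (1 - p)) (hb : μ {ω | ξ ω = b} = ENNReal.ofReal p)
    (g : ℝ → ℝ) :
    (fun ω => g (ξ ω)) =ᵐ[μ]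
      {ω | ξ ω = a}.indicator (fun _ => g a) + {ω | ξ ω = b}.indicator (fun _ => g b) := by
  filter_upwards [ae_eq_or_eq_of_two_point hξ hab hp0 hp1 ha hb] with ω h
  rcases h with h | h <;> simp [Set.indicator, h, hab, hab.symm]

lemma integrable_comp_of_two_point (hξ : Measurable ξ) (hab : a ≠ b) (hp0 : 0 ≤ p)
    (hp1 : p ≤ 1)
    (ha : μ {ω | ξ ω = a} = ENNReal.ofReal (1 - p)) (hb : μ {ω | ξ ω = b} = ENNReal.ofReal p)
    (g : ℝ → ℝ) :
    Integrable (fun ω => g (ξ ω)) μ :=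
  (((integrable_const (g a)).indicator (hξ (measurableSet_singleton a))).add
    ((integrable_const (g b)).indicator (hξ (measurableSet_singleton b)))).congr
    (comp_ae_eq_indicator_of_two_point hξ hab hp0 hp1 ha hb g).symm

lemma integral_comp_of_two_point (hξ : Measurable ξ) (hab : a ≠ b) (hp0 : 0 ≤ p)
    (hp1 : p ≤ 1)
    (ha : μ {ω | ξ ω = a} = ENNReal.ofReal (1 - p)) (hb : μ {ω | ξ ω = b} = ENNReal.ofReal p)
    (g : ℝ → ℝ) :
    ∫ ω, g (ξ ω) ∂μ = (1 - p) * g a + p * g b := by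
  have hma : MeasurableSet {ω | ξ ω = a} := hξ (measurableSet_singleton a)
  have hmb : MeasurableSet {ω | ξ ω = b} := hξ (measurableSet_singleton b)
  rw [integral_congr_ae (comp_ae_eq_indicator_of_two_point hξ hab hp0 hp1 ha hb g),
    integral_add' ((integrable_const _).indicator hma) ((integrable_const _).indicator hmb),
    integral_indicator_const _ hma, integral_indicator_const _ hmb, measureReal_def,
    measureReal_def, ha, hb, ENNReal.toReal_ofReal (by linarith), ENNReal.toReal_ofReal hp0,
    smul_eq_mul, smul_eq_mul]

end TwoPoint

section FractBounds

variable {R : Type*} [Field R] [LinearOrder R] [IsStrictOrderedRing R] [FloorRing R]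

lemma Int.fract_mul_one_sub_fract_nonneg (x : R) : 0 ≤ Int.fract x * (1 - Int.fract x) :=
  mul_nonneg (Int.fract_nonneg x) (sub_nonneg.2 (Int.fract_lt_one x).le)

lemma Int.fract_mul_one_sub_fract_le_one (x : R) : Int.fract x * (1 - Int.fract x) ≤ 1 := by
  nlinarith [Int.fract_nonneg x, Int.fract_lt_one x]

lemma Int.fract_mul_one_sub_fract_le_self {x : R} (hx : 0 ≤ x) :
    Int.fract x * (1 - Int.fract x) ≤ x := by
  have hfloor : (0 : R) ≤ ⌊x⌋ := by exact_mod_cast Int.floor_nonneg.2 hx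
  nlinarith [Int.fract_nonneg x, Int.self_sub_floor x]

lemma Int.floor_div_ne_floor_add_one_div {x M : R} (hM : M ≠ 0) :
    (⌊x⌋ : R) / M ≠ (⌊x⌋ + 1) / M :=
  fun h => (lt_add_one (⌊x⌋ : R)).ne ((div_left_inj' hM).1 h)

end FractBounds

section StochasticRounding

variable {Ω : Type*} [MeasurableSpace Ω]

def IsStochasticRounding (μ : Measure Ω) (ξ : Ω → ℝ) (M x : ℝ) : Prop :=
  Measurable ξ ∧ μ {ω | ξ ω = ⌊x⌋ / M} = ENNReal.ofReal (1 - Int.fract x) ∧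
    μ {ω | ξ ω = (⌊x⌋ + 1) / M} = ENNReal.ofReal (Int.fract x)

namespace IsStochasticRounding

variable {μ : Measure Ω} [IsProbabilityMeasure μ] {ξ : Ω → ℝ} {M x : ℝ}

lemma integrable_comp (h : IsStochasticRounding μ ξ M x) (hM : M ≠ 0) (g : ℝ → ℝ) :
    Integrable (fun ω => g (ξ ω)) μ :=
  integrable_comp_of_two_point h.1 (Int.floor_div_ne_floor_add_one_div hM) (Int.fract_nonneg x)
    (Int.fract_lt_one x).le h.2.1 h.2.2 g

lemma integral_comp (h : IsStochasticRounding μ ξ M x) (hM : M ≠ 0) (g : ℝ → ℝ) :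
    ∫ ω, g (ξ ω) ∂μ =
      (1 - Int.fract x) * g (⌊x⌋ / M) + Int.fract x * g ((⌊x⌋ + 1) / M) :=
  integral_comp_of_two_point h.1 (Int.floor_div_ne_floor_add_one_div hM) (Int.fract_nonneg x)
    (Int.fract_lt_one x).le h.2.1 h.2.2 g

lemma integral_eq (h : IsStochasticRounding μ ξ M x) (hM : M ≠ 0) :
    ∫ ω, ξ ω ∂μ = x / M := by
  refine (h.integral_comp hM id).trans ?_
  dsimp only [id]
  linear_combination Int.floor_add_fract x / M

lemma integral_sq_sub (h : IsStochasticRounding μ ξ M x) (hM : M ≠ 0) :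
    ∫ ω, (ξ ω - x / M) ^ 2 ∂μ = Int.fract x * (1 - Int.fract x) / M ^ 2 := by
  rw [h.integral_comp hM fun t => (t - x / M) ^ 2]
  linear_combination (⌊x⌋ + Int.fract x - x) / M ^ 2 * Int.floor_add_fract x

lemma integral_sq_const_mul_sub (h : IsStochasticRounding μ ξ M x) (hM : M ≠ 0) (c : ℝ) :
    ∫ ω, (c * ξ ω - c * (x / M)) ^ 2 ∂μ = c ^ 2 * (Int.fract x * (1 - Int.fract x) / M ^ 2) := by
  rw [← h.integral_sq_sub hM, ← integral_const_mul]
  congr with ω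
  ring

lemma integral_sq_const_mul_sub_le (h : IsStochasticRounding μ ξ M x) (hM : M ≠ 0) {c r : ℝ}
    (hc : c ^ 2 ≤ r ^ 2) :
    ∫ ω, (c * ξ ω - c * (x / M)) ^ 2 ∂μ ≤ r ^ 2 * (Int.fract x * (1 - Int.fract x) / M ^ 2) := by
  rw [h.integral_sq_const_mul_sub hM]
  gcongr
  exact div_nonneg (Int.fract_mul_one_sub_fract_nonneg x) (sq_nonneg M)

end IsStochasticRounding

end StochasticRounding

lemma sum_abs_le_sqrt_card_mul_sqrt_sum_sq {ι : Type*} [Fintype ι] (v : ι → ℝ) :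
    ∑ i, |v i| ≤ √(Fintype.card ι) * √(∑ i, v i ^ 2) := by
  rw [← Real.sqrt_mul (Nat.cast_nonneg _)]
  apply Real.le_sqrt_of_sq_le
  simpa [sq_abs] using sq_sum_le_card_mul_sum_sq (s := univ) (f := fun i => |v i|)

lemma sum_fract_mul_one_sub_fract_le {ι : Type*} [Fintype ι] (v : ι → ℝ) {M : ℝ} (hM : 0 ≤ M)
    (hv : 0 < √(∑ i, v i ^ 2)) :
    ∑ i, Int.fract (M * |v i| / √(∑ k, v k ^ 2)) * (1 - Int.fract (M * |v i| / √(∑ k, v k ^ 2)))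
      ≤ min (Fintype.card ι : ℝ) (M * √(Fintype.card ι)) := by
  set r := √(∑ k, v k ^ 2)
  refine le_min ?_ ?_
  · calc _ ≤ ∑ _i : ι, (1 : ℝ) := sum_le_sum fun i _ => Int.fract_mul_one_sub_fract_le_one _
      _ = Fintype.card ι := by simp
  · calc _ ≤ ∑ i, M * |v i| / r :=
          sum_le_sum fun i _ => Int.fract_mul_one_sub_fract_le_self (by positivity)
      _ = M / r * ∑ i, |v i| := by rw [mul_sum]; exact sum_congr rfl fun i _ => by ring
      _ ≤ M / r * (√(Fintype.card ι) * r) := by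
          gcongr
          exact sum_abs_le_sqrt_card_mul_sqrt_sum_sq v
      _ = M * √(Fintype.card ι) := by field_simp

lemma Real.sign_mul_abs (a : ℝ) : Real.sign a * |a| = a := by
  rcases lt_trichotomy a 0 with h | rfl | h
  · rw [Real.sign_of_neg h, abs_of_neg h, neg_one_mul, neg_neg]
  · simp
  · rw [Real.sign_of_pos h, abs_of_pos h, one_mul]

lemma Real.mul_sign_mul_abs_div_div (a : ℝ) {r M : ℝ} (hr : r ≠ 0) (hM : M ≠ 0) :
    r * Real.sign a * (M * |a| / r / M) = a := by
  field_simp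
  linarith [Real.sign_mul_abs a]

lemma Real.mul_sign_sq_le (r a : ℝ) : (r * Real.sign a) ^ 2 ≤ r ^ 2 := by
  rw [mul_pow]
  refine mul_le_of_le_one_right (sq_nonneg r) ?_
  rcases Real.sign_apply_eq a with h | h | h <;> rw [h] <;> norm_num

theorem stmt_9_general (n : ℕ) (M : ℕ) (hM : 1 ≤ M)
    (v : Fin n → ℝ) (hv : v ≠ 0)
    {Ω : Type*} [MeasurableSpace Ω] (μ : Measure Ω) [IsProbabilityMeasure μ]
    (ξ : Fin n → Ω → ℝ) (hmeas : ∀ i, Measurable (ξ i))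
    (hlow : ∀ i,
      μ {ω | ξ i ω = (⌊(M : ℝ) * |v i| / Real.sqrt (∑ k, v k ^ 2)⌋ : ℝ) / M} =
        ENNReal.ofReal (1 - ((M : ℝ) * |v i| / Real.sqrt (∑ k, v k ^ 2)
          - ⌊(M : ℝ) * |v i| / Real.sqrt (∑ k, v k ^ 2)⌋)))
    (hhigh : ∀ i,
      μ {ω | ξ i ω = ((⌊(M : ℝ) * |v i| / Real.sqrt (∑ k, v k ^ 2)⌋ : ℝ) + 1) / M} =
        ENNReal.ofReal ((M : ℝ) * |v i| / Real.sqrt (∑ k, v k ^ 2)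
          - ⌊(M : ℝ) * |v i| / Real.sqrt (∑ k, v k ^ 2)⌋)) :
    (∀ i, ∫ ω, Real.sqrt (∑ k, v k ^ 2) * Real.sign (v i) * ξ i ω ∂μ = v i) ∧
      ∫ ω, ∑ i, (Real.sqrt (∑ k, v k ^ 2) * Real.sign (v i) * ξ i ω - v i) ^ 2 ∂μ ≤
        min ((n : ℝ) / M ^ 2) (Real.sqrt n / M) * (∑ k, v k ^ 2) := by
  set S := ∑ k, v k ^ 2
  set r := √S
  set x : Fin n → ℝ := fun i => M * |v i| / r
  obtain ⟨j, hj⟩ : ∃ j, v j ≠ 0 := Function.ne_iff.1 hv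
  have hS : 0 < S := sum_pos' (fun i _ => sq_nonneg (v i)) ⟨j, mem_univ j, by positivity⟩
  have hr : 0 < r := Real.sqrt_pos.2 hS
  have hM0 : (M : ℝ) ≠ 0 := by positivity
  have hround : ∀ i, IsStochasticRounding μ (ξ i) M (x i) := fun i => ⟨hmeas i, hlow i, hhigh i⟩
  have hcoord : ∀ i, r * Real.sign (v i) * (x i / M) = v i := fun i =>
    Real.mul_sign_mul_abs_div_div (v i) hr.ne' hM0
  have hvar : ∀ i, ∫ ω, (r * Real.sign (v i) * ξ i ω - v i) ^ 2 ∂μ ≤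
      r ^ 2 * (Int.fract (x i) * (1 - Int.fract (x i)) / M ^ 2) := fun i => by
    simpa only [hcoord] using
      (hround i).integral_sq_const_mul_sub_le hM0 (Real.mul_sign_sq_le r (v i))
  refine ⟨fun i => by rw [integral_const_mul, (hround i).integral_eq hM0, hcoord], ?_⟩
  rw [integral_finsetSum _ fun i _ => (hround i).integrable_comp hM0
    fun t => (r * Real.sign (v i) * t - v i) ^ 2]
  calc ∑ i, ∫ ω, (r * Real.sign (v i) * ξ i ω - v i) ^ 2 ∂μ
      ≤ ∑ i, r ^ 2 * (Int.fract (x i) * (1 - Int.fract (x i)) / M ^ 2) :=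
        sum_le_sum fun i _ => hvar i
    _ = (∑ i, Int.fract (x i) * (1 - Int.fract (x i))) * (r ^ 2 / M ^ 2) := by
        rw [sum_mul]; exact sum_congr rfl fun i _ => by ring
    _ ≤ min (n : ℝ) (M * √n) * (r ^ 2 / M ^ 2) := by
        gcongr
        simpa using sum_fract_mul_one_sub_fract_le v (Nat.cast_nonneg M) hr
    _ = min ((n : ℝ) / M ^ 2) (√n / M) * S := by
        rw [Real.sq_sqrt hS.le, min_mul_of_nonneg _ _ (by positivity),
          min_mul_of_nonneg _ _ hS.le]
        congr 1 <;> field_simp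

/-- QSGD quantizer (Alistarh et al., Lemma 3.1): unbiasedness and variance bound. -/
theorem stmt_9 (n : ℕ) (hn : 0 < n) (M : ℕ) (hM : 1 ≤ M)
    (v : Fin n → ℝ) (hv : v ≠ 0)
    {Ω : Type*} [MeasurableSpace Ω] (μ : Measure Ω) [IsProbabilityMeasure μ]
    (ξ : Fin n → Ω → ℝ) (hmeas : ∀ i, Measurable (ξ i))
    (hlow : ∀ i,
      μ {ω | ξ i ω = (⌊(M : ℝ) * |v i| / Real.sqrt (∑ k, v k ^ 2)⌋ : ℝ) / M} =
        ENNReal.ofReal (1 - ((M : ℝ) * |v i| / Real.sqrt (∑ k, v k ^ 2)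
          - ⌊(M : ℝ) * |v i| / Real.sqrt (∑ k, v k ^ 2)⌋)))
    (hhigh : ∀ i,
      μ {ω | ξ i ω = ((⌊(M : ℝ) * |v i| / Real.sqrt (∑ k, v k ^ 2)⌋ : ℝ) + 1) / M} =
        ENNReal.ofReal ((M : ℝ) * |v i| / Real.sqrt (∑ k, v k ^ 2)
          - ⌊(M : ℝ) * |v i| / Real.sqrt (∑ k, v k ^ 2)⌋)) :
    (∀ i, ∫ ω, Real.sqrt (∑ k, v k ^ 2) * Real.sign (v i) * ξ i ω ∂μ = v i) ∧
      ∫ ω, ∑ i, (Real.sqrt (∑ k, v k ^ 2) * Real.sign (v i) * ξ i ω - v i) ^ 2 ∂μ ≤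
        min ((n : ℝ) / M ^ 2) (Real.sqrt n / M) * (∑ k, v k ^ 2) :=
  stmt_9_general n M hM v hv μ ξ hmeas hlow hhigh
end
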